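/- In the semigroup H, for any word V in the letters a1, a2, a3 and any i ∈ {1,2,3}: s1·V·Q·a_i = t_i·V·a_i·Q, and s2·R·V·Q·a_i = t_i·V·R·a_i·Q. -/

import Mathlib

inductive Phi
  | L | M | P | Q | R | g | s1 | s2 | t1 | t2 | t3 | a1 | a2 | a3
deriving DecidableEq

open Phi

abbrev W0 := WithZero (FreeMonoid Phi)

def w (l : List Phi) : W0 := ((FreeMonoid.ofList l : FreeMonoid Phi) : W0)

def ai : Fin 3 → Phi
  | 0 => a1 | 1 => a2 | 2 => a3

def ti : Fin 3 → Phi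
  | 0 => t1 | 1 => t2 | 2 => t3

def si : Fin 2 → Phi
  | 0 => s1 | 1 => s2

/-- `x` is one of the letters `a1, a2, a3`. -/
def isA (x : Phi) : Prop := x = a1 ∨ x = a2 ∨ x = a3

/-- The defining relations (1)–(14) of the semigroup `H`. -/
inductive rel : W0 → W0 → Prop
  | r1L (x : Phi) : rel (w [x, L]) 0
  | r1M (x : Phi) : rel (w [x, M]) 0
  | r2 : rel (w [L]) (w [M, P, g])
  | r3 (i : Fin 3) : rel (w [g, ai i]) (w [ai i, g])
  | r4 (x : Phi) (h : ¬ isA x) : rel (w [g, x]) 0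
  | r5 (i j : Fin 3) : rel (w [ai i, g, ai j]) (w [ai i, R, s1, Q, ai j])
  | r6 (i : Fin 3) (x : Phi) (h : x = R ∨ isA x) : rel (w [ti i, x]) (w [x, ti i])
  | r7 (i : Fin 3) : rel (w [P, ai i, ti i]) (w [ai i, P, s1])
  | r8 (i j : Fin 3) (h : i ≠ j) : rel (w [P, ai j, ti i]) (w [ai j, P, s2])
  | r9 (i : Fin 3) (j : Fin 2) : rel (w [si j, ai i]) (w [ai i, si j])
  | r10 : rel (w [s1, R]) (w [R, s1])
  | r11 (i : Fin 3) : rel (w [s1, Q, ai i]) (w [ti i, ai i, Q])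
  | r12 : rel (w [P, R, s1]) 0
  | r13 (i : Fin 3) : rel (w [s2, R, ai i]) (w [ai i, s2, R])
  | r14 (i : Fin 3) : rel (w [s2, R, Q, ai i]) (w [R, ti i, ai i, Q])

/-- The congruence on the free monoid with zero generated by the relations. -/
def hCon : Con W0 := conGen rel

/-- The semigroup (with zero) `H` of the paper. -/
abbrev H := hCon.Quotient

/-- The quotient map. -/
def q : W0 →* H := hCon.mk'

/-- `l` is a word in the letters `a1, a2, a3`. -/
def Aword (l : List Phi) : Prop := ∀ x ∈ l, isA x

/-- `l` is square-free: it contains no factor `Y ++ Y` with `Y` nonempty. -/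
def SqFree (l : List Phi) : Prop := ∀ Y : List Phi, Y ≠ [] → ¬ (Y ++ Y) <:+: l


/-!
The letters `s1` and `tᵢ` and the word `s2·R` commute with each of `a1, a2, a3`
(relations (9), (6) and (13)), hence with every word `V` in these letters. Moving them
across `V` reduces the two identities to relation (11), respectively to relation (14)
followed by `tᵢ·R = R·tᵢ`.
-/

lemma q_w_nil : q (w []) = 1 := by
  simp [w]

lemma q_w_cons (x : Phi) (l : List Phi) : q (w (x :: l)) = q (w [x]) * q (w l) := by
  simp [w, ← map_mul]

lemma q_w_append (l m : List Phi) : q (w (l ++ m)) = q (w l) * q (w m) := by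
  simp [w, ← map_mul]

lemma q_eq_of_rel {l m : List Phi} (h : rel (w l) (w m)) : q (w l) = q (w m) :=
  hCon.eq.mpr (ConGen.Rel.of _ _ h)

lemma isA.exists_eq_ai {x : Phi} (h : isA x) : ∃ j : Fin 3, x = ai j := by
  rcases h with h | h | h
  exacts [⟨0, h⟩, ⟨1, h⟩, ⟨2, h⟩]

lemma commute_q_w_of_aword {y : H} (hy : ∀ x, isA x → Commute y (q (w [x])))
    {V : List Phi} (hV : Aword V) : Commute y (q (w V)) := by
  induction V with
  | nil => simpa only [q_w_nil] using Commute.one_right y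
  | cons x V ih =>
    rw [q_w_cons]
    exact (hy x (hV x List.mem_cons_self)).mul_right
      (ih fun z hz => hV z (List.mem_cons_of_mem x hz))

lemma commute_s1_aword {V : List Phi} (hV : Aword V) : Commute (q (w [s1])) (q (w V)) := by
  refine commute_q_w_of_aword (fun x hx => ?_) hV
  obtain ⟨j, rfl⟩ := hx.exists_eq_ai
  rw [Commute, SemiconjBy, ← q_w_append, ← q_w_append]
  exact q_eq_of_rel (rel.r9 j 0)

lemma commute_ti_aword (i : Fin 3) {V : List Phi} (hV : Aword V) :
    Commute (q (w [ti i])) (q (w V)) := by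
  refine commute_q_w_of_aword (fun x hx => ?_) hV
  rw [Commute, SemiconjBy, ← q_w_append, ← q_w_append]
  exact q_eq_of_rel (rel.r6 i x (Or.inr hx))

lemma commute_s2_R_aword {V : List Phi} (hV : Aword V) : Commute (q (w [s2, R])) (q (w V)) := by
  refine commute_q_w_of_aword (fun x hx => ?_) hV
  obtain ⟨j, rfl⟩ := hx.exists_eq_ai
  rw [Commute, SemiconjBy, ← q_w_append, ← q_w_append]
  exact q_eq_of_rel (rel.r13 j)

/-- for any word `V` in `a1,a2,a3`:
`s1·V·Q·aᵢ = tᵢ·V·aᵢ·Q` and `s2·R·V·Q·aᵢ = tᵢ·V·R·aᵢ·Q`. -/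
theorem stmt4 (V : List Phi) (hV : Aword V) (i : Fin 3) :
    q (w ([s1] ++ V ++ [Q, ai i])) = q (w ([ti i] ++ V ++ [ai i, Q])) ∧
    q (w ([s2, R] ++ V ++ [Q, ai i])) = q (w ([ti i] ++ V ++ [R, ai i, Q])) := by
  have r11 : q (w [s1]) * q (w [Q, ai i]) = q (w [ti i]) * q (w [ai i, Q]) := by
    rw [← q_w_append, ← q_w_append]
    exact q_eq_of_rel (rel.r11 i)
  have r14 : q (w [s2, R]) * q (w [Q, ai i]) = q (w [R, ti i]) * q (w [ai i, Q]) := by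
    rw [← q_w_append, ← q_w_append]
    exact q_eq_of_rel (rel.r14 i)
  have r6 : q (w [ti i, R]) = q (w [R, ti i]) := q_eq_of_rel (rel.r6 i R (Or.inl rfl))
  simp only [q_w_append]
  set v := q (w V)
  constructor
  · calc q (w [s1]) * v * q (w [Q, ai i]) = v * (q (w [s1]) * q (w [Q, ai i])) := by
          rw [(commute_s1_aword hV).eq, mul_assoc]
      _ = v * (q (w [ti i]) * q (w [ai i, Q])) := by rw [r11]
      _ = q (w [ti i]) * v * q (w [ai i, Q]) := by rw [← mul_assoc, (commute_ti_aword i hV).eq]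
  · calc q (w [s2, R]) * v * q (w [Q, ai i]) = v * (q (w [s2, R]) * q (w [Q, ai i])) := by
          rw [(commute_s2_R_aword hV).eq, mul_assoc]
      _ = v * (q (w [ti i]) * q (w [R, ai i, Q])) := by
          rw [r14, ← r6, q_w_cons (ti i) [R], q_w_cons R [ai i, Q], mul_assoc]
      _ = q (w [ti i]) * v * q (w [R, ai i, Q]) := by rw [← mul_assoc, (commute_ti_aword i hV).eq]
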